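/- arXiv:math/0604090 — 4 statements merged into one kernel-verified Lean document; each statement's English description precedes it below -/
import Mathlib

section
/- If f is twice continuously differentiable on (0,1) and f''(x)·x² → C⁺ > 0 as x → 0⁺, then f(x)/|log x| → C⁺ as x → 0⁺. -/
open Set Filter Topology

/-!
Apply L'Hôpital's rule in its `∞/∞` form twice at `0⁺`. With `x⁻¹` as denominator,
`f'(x) / x⁻¹` has derivative quotient `f''(x) / (-x⁻²) → -C`, so `x f'(x) → -C`. Then with
`-log x` as denominator, `f(x) / (-log x)` has derivative quotient `f'(x) / (-x⁻¹) = -x f'(x) → C`.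
The `∞/∞` rule follows from monotonicity: if `g'/h' ≤ M` and `h' < 0`,
then `g - M h` is increasing, so `g/h ≤ M + O(1/h)`.
-/

theorem monotoneOn_Ioo_of_hasDerivAt_nonneg {φ φ' : ℝ → ℝ} {a b : ℝ}
    (hφ : ∀ x ∈ Ioo a b, HasDerivAt φ (φ' x) x) (hφ' : ∀ x ∈ Ioo a b, 0 ≤ φ' x) :
    MonotoneOn φ (Ioo a b) :=
  monotoneOn_of_hasDerivWithinAt_nonneg (convex_Ioo a b)
    (fun x hx => (hφ x hx).continuousAt.continuousWithinAt)
    (by simpa only [interior_Ioo] using fun x hx => (hφ x hx).hasDerivWithinAt)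
    (by simpa only [interior_Ioo] using hφ')

section LHopitalAtTop

variable {g g' h h' : ℝ → ℝ} {a : ℝ}

theorem eventually_div_lt_of_deriv_div_le {M M' : ℝ}
    (hg : ∀ᶠ x in 𝓝[>] a, HasDerivAt g (g' x) x) (hh : ∀ᶠ x in 𝓝[>] a, HasDerivAt h (h' x) x)
    (hh' : ∀ᶠ x in 𝓝[>] a, h' x < 0) (htop : Tendsto h (𝓝[>] a) atTop)
    (hM : ∀ᶠ x in 𝓝[>] a, g' x / h' x ≤ M) (hMM' : M < M') :
    ∀ᶠ x in 𝓝[>] a, g x / h x < M' := by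
  obtain ⟨c, hac, hc⟩ := mem_nhdsGT_iff_exists_Ioo_subset.1 (hg.and (hh.and (hh'.and hM)))
  have hmono : MonotoneOn (fun x => g x - M * h x) (Ioo a c) := by
    refine monotoneOn_Ioo_of_hasDerivAt_nonneg (φ' := fun x => g' x - M * h' x)
      (fun x hx => ((hc hx).1.sub ((hc hx).2.1.const_mul M))) fun x hx => ?_
    obtain ⟨-, -, hneg, hle⟩ := hc hx
    have := (div_le_iff_of_neg hneg).1 hle
    linarith
  obtain ⟨y, hay, hyc⟩ := exists_between (mem_Ioi.1 hac)
  have hrem : Tendsto (fun x => (g y - M * h y) / h x) (𝓝[>] a) (𝓝 0) :=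
    tendsto_const_nhds.div_atTop htop
  filter_upwards [Ioo_mem_nhdsGT hay, htop.eventually_gt_atTop 0,
    (tendsto_order.1 hrem).2 _ (sub_pos.2 hMM')] with x hx hpos hsmall
  have hxy : g x - M * h x ≤ g y - M * h y :=
    hmono ⟨hx.1, hx.2.trans hyc⟩ ⟨hay, hyc⟩ hx.2.le
  calc g x / h x = M + (g x - M * h x) / h x := by field_simp; ring
    _ ≤ M + (g y - M * h y) / h x := by gcongr
    _ < M' := by linarith

theorem lhopital_atTop_nhdsGT {L : ℝ}
    (hg : ∀ᶠ x in 𝓝[>] a, HasDerivAt g (g' x) x) (hh : ∀ᶠ x in 𝓝[>] a, HasDerivAt h (h' x) x)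
    (hh' : ∀ᶠ x in 𝓝[>] a, h' x < 0) (htop : Tendsto h (𝓝[>] a) atTop)
    (hdiv : Tendsto (fun x => g' x / h' x) (𝓝[>] a) (𝓝 L)) :
    Tendsto (fun x => g x / h x) (𝓝[>] a) (𝓝 L) := by
  refine tendsto_order.2 ⟨fun m' hm' => ?_, fun M' hM' => ?_⟩
  · obtain ⟨m, hm'm, hmL⟩ := exists_between hm'
    have hneg := eventually_div_lt_of_deriv_div_le (g := -g) (g' := -g') (hg.mono fun x hx => hx.neg)
      hh hh' htop (((tendsto_order.1 hdiv).1 m hmL).mono fun x hx => ?_) (neg_lt_neg hm'm)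
    · filter_upwards [hneg] with x hx
      simp only [Pi.neg_apply, neg_div] at hx
      linarith
    · simp only [Pi.neg_apply, neg_div]
      linarith
  · obtain ⟨M, hLM, hMM'⟩ := exists_between hM'
    exact eventually_div_lt_of_deriv_div_le hg hh hh' htop
      (((tendsto_order.1 hdiv).2 M hLM).mono fun x hx => hx.le) hMM'

end LHopitalAtTop

theorem tendsto_mul_deriv_of_tendsto_deriv2_mul_sq {F' F'' : ℝ → ℝ} {C : ℝ}
    (hF' : ∀ᶠ x in 𝓝[>] 0, HasDerivAt F' (F'' x) x)
    (hlim : Tendsto (fun x => F'' x * x ^ 2) (𝓝[>] 0) (𝓝 C)) :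
    Tendsto (fun x => F' x * x) (𝓝[>] 0) (𝓝 (-C)) := by
  have hinv : ∀ᶠ x in 𝓝[>] (0:ℝ), HasDerivAt (fun x => x⁻¹) (-(x ^ 2)⁻¹) x :=
    eventually_mem_nhdsWithin.mono fun x hx => hasDerivAt_inv (ne_of_gt hx)
  have hneg : ∀ᶠ x in 𝓝[>] (0:ℝ), -(x ^ 2)⁻¹ < 0 :=
    eventually_mem_nhdsWithin.mono fun x hx => by simpa using pow_pos (mem_Ioi.1 hx) 2
  have key := lhopital_atTop_nhdsGT hF' hinv hneg tendsto_inv_nhdsGT_zero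
    (hlim.neg.congr' (eventually_mem_nhdsWithin.mono fun x hx => by
      field_simp [ne_of_gt (mem_Ioi.1 hx)]))
  simpa only [div_inv_eq_mul] using key

theorem tendsto_div_neg_log_of_tendsto_mul_deriv {F F' : ℝ → ℝ} {C : ℝ}
    (hF : ∀ᶠ x in 𝓝[>] 0, HasDerivAt F (F' x) x)
    (hlim : Tendsto (fun x => F' x * x) (𝓝[>] 0) (𝓝 (-C))) :
    Tendsto (fun x => F x / -Real.log x) (𝓝[>] 0) (𝓝 C) := by
  have hlog : ∀ᶠ x in 𝓝[>] (0:ℝ), HasDerivAt (fun x => -Real.log x) (-x⁻¹) x :=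
    eventually_mem_nhdsWithin.mono fun x hx => (Real.hasDerivAt_log (ne_of_gt hx)).neg
  have hneg : ∀ᶠ x in 𝓝[>] (0:ℝ), -x⁻¹ < 0 :=
    eventually_mem_nhdsWithin.mono fun x hx => by simpa using mem_Ioi.1 hx
  refine lhopital_atTop_nhdsGT hF hlog hneg
    (tendsto_neg_atBot_atTop.comp Real.tendsto_log_nhdsGT_zero) ?_
  simpa only [div_neg, div_inv_eq_mul, neg_neg] using hlim.neg

theorem log_singularity_at_zero_general (f f' f'' : ℝ → ℝ) (C : ℝ)
    (hderiv1 : ∀ x ∈ Ioo (0:ℝ) 1, HasDerivAt f (f' x) x)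
    (hderiv2 : ∀ x ∈ Ioo (0:ℝ) 1, HasDerivAt f' (f'' x) x)
    (hlim : Tendsto (fun x => f'' x * x ^ 2) (nhdsWithin 0 (Ioo (0:ℝ) 1)) (nhds C)) :
    Tendsto (fun x => f x / |Real.log x|) (nhdsWithin 0 (Ioo (0:ℝ) 1)) (nhds C) := by
  rw [nhdsWithin_Ioo_eq_nhdsGT one_pos] at hlim ⊢
  have hIoo : ∀ᶠ x in 𝓝[>] (0:ℝ), x ∈ Ioo (0:ℝ) 1 := Ioo_mem_nhdsGT one_pos
  have hxf' := tendsto_mul_deriv_of_tendsto_deriv2_mul_sq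
    (hIoo.mono fun x hx => hderiv2 x hx) hlim
  refine (tendsto_div_neg_log_of_tendsto_mul_deriv (hIoo.mono fun x hx => hderiv1 x hx)
    hxf').congr' (hIoo.mono fun x hx => ?_)
  dsimp only
  rw [abs_of_neg (Real.log_neg hx.1 hx.2)]

theorem log_singularity_at_zero (f f' f'' : ℝ → ℝ) (C : ℝ) (hC : 0 < C)
    (hderiv1 : ∀ x ∈ Ioo (0:ℝ) 1, HasDerivAt f (f' x) x)
    (hderiv2 : ∀ x ∈ Ioo (0:ℝ) 1, HasDerivAt f' (f'' x) x)
    (hcont : ContinuousOn f'' (Ioo (0:ℝ) 1))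
    (hlim : Tendsto (fun x => f'' x * x ^ 2) (nhdsWithin 0 (Ioo (0:ℝ) 1)) (nhds C)) :
    Tendsto (fun x => f x / |Real.log x|) (nhdsWithin 0 (Ioo (0:ℝ) 1)) (nhds C) :=
  log_singularity_at_zero_general f f' f'' C hderiv1 hderiv2 hlim
end

section
/- If f is twice continuously differentiable on (0,1) and (1-x)²·f''(x) → C⁻ > 0 as x → 1⁻, then f(x)/|log(1-x)| → C⁻ as x → 1⁻. -/
/-!
Two rounds of the `∞/∞` form of L'Hôpital's rule at `1⁻`, phrased as integrating a little-o
relation: `f'' - C (1 - x)⁻² = o((1 - x)⁻²)` integrates to `f' - C (1 - x)⁻¹ = o((1 - x)⁻¹)`,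
which integrates to `f + C log (1 - x) = o(-log (1 - x))`. Integration only needs the mean value
theorem: if `|h'| ≤ ε w'` near `1`, then `ε w ± h` are monotone there, and the constant lost
at a fixed base point is negligible because `w → ∞`.
-/

open Set Filter Topology Asymptotics

theorem abs_sub_le_sub_of_abs_hasDerivAt_le {a b x y : ℝ} {h h' w w' : ℝ → ℝ}
    (hh : ∀ t ∈ Ioo a b, HasDerivAt h (h' t) t) (hw : ∀ t ∈ Ioo a b, HasDerivAt w (w' t) t)
    (hle : ∀ t ∈ Ioo a b, |h' t| ≤ w' t) (hy : y ∈ Ioo a b) (hx : x ∈ Ioo a b) (hyx : y ≤ x) :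
    |h x - h y| ≤ w x - w y := by
  have monotoneOn_of_nonneg {g g' : ℝ → ℝ} (hg : ∀ t ∈ Ioo a b, HasDerivAt g (g' t) t)
      (hg' : ∀ t ∈ Ioo a b, 0 ≤ g' t) : MonotoneOn g (Ioo a b) :=
    monotoneOn_of_hasDerivWithinAt_nonneg (convex_Ioo a b)
      (fun t ht => (hg t ht).continuousAt.continuousWithinAt)
      (fun t ht => (hg t (interior_subset ht)).hasDerivWithinAt)
      (fun t ht => hg' t (interior_subset ht))
  have hsub : w y - h y ≤ w x - h x :=
    monotoneOn_of_nonneg (fun t ht => (hw t ht).sub (hh t ht))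
      (fun t ht => by linarith [le_abs_self (h' t), hle t ht]) hy hx hyx
  have hadd : w y + h y ≤ w x + h x :=
    monotoneOn_of_nonneg (fun t ht => (hw t ht).add (hh t ht))
      (fun t ht => by linarith [neg_abs_le (h' t), hle t ht]) hy hx hyx
  rw [abs_sub_le_iff]
  constructor <;> linarith

theorem Asymptotics.IsLittleO.of_isLittleO_deriv_nhdsLT {b : ℝ} {h h' w w' : ℝ → ℝ}
    (hh : ∀ᶠ x in 𝓝[<] b, HasDerivAt h (h' x) x) (hw : ∀ᶠ x in 𝓝[<] b, HasDerivAt w (w' x) x)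
    (hw' : ∀ᶠ x in 𝓝[<] b, 0 ≤ w' x) (hw_top : Tendsto w (𝓝[<] b) atTop)
    (ho : h' =o[𝓝[<] b] w') : h =o[𝓝[<] b] w := by
  rw [isLittleO_iff]
  intro ε hε
  obtain ⟨a, hab : a < b, hsub⟩ := mem_nhdsLT_iff_exists_Ioo_subset.1
    (hh.and (hw.and (hw'.and (ho.bound (half_pos hε)))))
  obtain ⟨y, hy⟩ := nonempty_Ioo.2 hab
  have hinc : ∀ x ∈ Ioo y b, |h x - h y| ≤ ε / 2 * w x - ε / 2 * w y := fun x hx =>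
    abs_sub_le_sub_of_abs_hasDerivAt_le (fun t ht => (hsub ht).1)
      (fun t ht => ((hsub ht).2.1).const_mul (ε / 2))
      (fun t ht => by
        obtain ⟨-, -, hpos, hbound⟩ := hsub ht
        rwa [Real.norm_eq_abs, Real.norm_of_nonneg hpos] at hbound)
      hy ⟨hy.1.trans hx.1, hx.2⟩ hx.1.le
  filter_upwards [Ioo_mem_nhdsLT hy.2, hw_top.eventually_ge_atTop 0,
    (hw_top.const_mul_atTop (half_pos hε)).eventually_ge_atTop (|h y| + ε / 2 * |w y|)]
    with x hx hw0 hlarge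
  rw [Real.norm_eq_abs, Real.norm_of_nonneg hw0]
  calc |h x| ≤ |h x - h y| + |h y| := by linarith [abs_sub_abs_le_abs_sub (h x) (h y)]
    _ ≤ ε / 2 * w x + (|h y| + ε / 2 * |w y|) := by
      linarith [hinc x hx, mul_le_mul_of_nonneg_left (neg_abs_le (w y)) (half_pos hε).le]
    _ ≤ ε * w x := by linarith

theorem hasDerivAt_inv_one_sub {x : ℝ} (hx : x ≠ 1) :
    HasDerivAt (fun t => (1 - t)⁻¹) ((1 - x) ^ 2)⁻¹ x := by
  have hx' : 1 - x ≠ 0 := sub_ne_zero.2 hx.symm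
  exact (((hasDerivAt_id' x).const_sub 1).inv hx').congr_deriv (by ring)

theorem hasDerivAt_neg_log_one_sub {x : ℝ} (hx : x ≠ 1) :
    HasDerivAt (fun t => -Real.log (1 - t)) (1 - x)⁻¹ x := by
  have hx' : 1 - x ≠ 0 := sub_ne_zero.2 hx.symm
  exact (((hasDerivAt_id' x).const_sub 1).log hx').fun_neg.congr_deriv (by ring)

theorem tendsto_one_sub_nhdsLT_one : Tendsto (fun x : ℝ => 1 - x) (𝓝[<] 1) (𝓝[>] 0) := by
  have h : Tendsto (fun x : ℝ => 1 - x) (𝓝 1) (𝓝 (1 - 1)) := tendsto_const_nhds.sub tendsto_id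
  rw [sub_self] at h
  exact tendsto_nhdsWithin_of_tendsto_nhds_of_eventually_within _ (h.mono_left nhdsWithin_le_nhds)
    (eventually_mem_nhdsWithin.mono fun x (hx : x < 1) => sub_pos.2 hx)

theorem tendsto_div_of_isLittleO_sub_const_mul {α : Type*} {l : Filter α} {f w : α → ℝ} {C : ℝ}
    (h : (fun x => f x - C * w x) =o[l] w) (hw : ∀ᶠ x in l, w x ≠ 0) :
    Tendsto (fun x => f x / w x) l (𝓝 C) := by
  refine (by simpa using h.tendsto_div_nhds_zero.add_const C : Tendsto _ l (𝓝 C)).congr' ?_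
  filter_upwards [hw] with x hx
  field_simp
  ring

theorem log_singularity_at_one_general (f f' f'' : ℝ → ℝ) (C : ℝ)
    (hderiv1 : ∀ x ∈ Ioo (0:ℝ) 1, HasDerivAt f (f' x) x)
    (hderiv2 : ∀ x ∈ Ioo (0:ℝ) 1, HasDerivAt f' (f'' x) x)
    (hlim : Tendsto (fun x => f'' x * (1 - x) ^ 2) (nhdsWithin 1 (Ioo (0:ℝ) 1)) (nhds C)) :
    Tendsto (fun x => f x / |Real.log (1 - x)|) (nhdsWithin 1 (Ioo (0:ℝ) 1)) (nhds C) := by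
  rw [nhdsWithin_Ioo_eq_nhdsLT zero_lt_one] at hlim ⊢
  have hI : ∀ᶠ x in 𝓝[<] (1 : ℝ), x ∈ Ioo 0 1 := Ioo_mem_nhdsLT zero_lt_one
  have hlt : ∀ᶠ x in 𝓝[<] (1 : ℝ), x < 1 := eventually_mem_nhdsWithin
  have hf' : (fun x => f' x - C * (1 - x)⁻¹) =o[𝓝[<] 1] fun x => (1 - x)⁻¹ :=
    IsLittleO.of_isLittleO_deriv_nhdsLT
      (hI.mono fun x hx => (hderiv2 x hx).sub ((hasDerivAt_inv_one_sub hx.2.ne).const_mul C))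
      (hlt.mono fun x hx => hasDerivAt_inv_one_sub hx.ne)
      (Eventually.of_forall fun x => by positivity)
      (tendsto_inv_nhdsGT_zero.comp tendsto_one_sub_nhdsLT_one)
      (isLittleO_iff_exists_eq_mul.2 ⟨fun x => f'' x * (1 - x) ^ 2 - C,
        by simpa using hlim.sub_const C, hlt.mono fun x hx => by
          have : 1 - x ≠ 0 := (sub_pos.2 hx).ne'
          simp only [Pi.mul_apply]
          field_simp⟩)
  have hf : (fun x => f x - C * -Real.log (1 - x)) =o[𝓝[<] 1] fun x => -Real.log (1 - x) :=
    IsLittleO.of_isLittleO_deriv_nhdsLT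
      (hI.mono fun x hx => (hderiv1 x hx).sub ((hasDerivAt_neg_log_one_sub hx.2.ne).const_mul C))
      (hlt.mono fun x hx => hasDerivAt_neg_log_one_sub hx.ne)
      (hlt.mono fun x hx => inv_nonneg.2 (sub_nonneg.2 hx.le))
      (tendsto_neg_atBot_atTop.comp (Real.tendsto_log_nhdsGT_zero.comp tendsto_one_sub_nhdsLT_one))
      hf'
  have hlog_neg : ∀ᶠ x in 𝓝[<] (1 : ℝ), Real.log (1 - x) < 0 :=
    hI.mono fun x hx => Real.log_neg (by linarith [hx.2]) (by linarith [hx.1])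
  refine (tendsto_div_of_isLittleO_sub_const_mul hf
    (hlog_neg.mono fun x hx => by linarith)).congr' ?_
  filter_upwards [hlog_neg] with x hx
  rw [abs_of_neg hx]

theorem log_singularity_at_one (f f' f'' : ℝ → ℝ) (C : ℝ) (hC : 0 < C)
    (hderiv1 : ∀ x ∈ Ioo (0:ℝ) 1, HasDerivAt f (f' x) x)
    (hderiv2 : ∀ x ∈ Ioo (0:ℝ) 1, HasDerivAt f' (f'' x) x)
    (hcont : ContinuousOn f'' (Ioo (0:ℝ) 1))
    (hlim : Tendsto (fun x => f'' x * (1 - x) ^ 2) (nhdsWithin 1 (Ioo (0:ℝ) 1)) (nhds C)) :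
    Tendsto (fun x => f x / |Real.log (1 - x)|) (nhdsWithin 1 (Ioo (0:ℝ) 1)) (nhds C) :=
  log_singularity_at_one_general f f' f'' C hderiv1 hderiv2 hlim
end

section
/- Fayad's uniform-distribution criterion: let g be a C² monotonic function on [a,b] with sup_{[a,b]} |g''| · (b−a) ≤ ε · inf_{[a,b]} |g'| for some 0 < ε < 1 and inf |g'| > 0. Then g is ε-uniformly distributed on [a,b]: for any c ≤ d with inf g ≤ c ≤ d ≤ sup g, the set I_{c,d} = {x ∈ [a,b] : c ≤ g(x) ≤ d} satisfies (1−ε)·(d−c)/(sup g − inf g) ≤ Leb(I_{c,d})/(b−a) ≤ (1+ε)·(d−c)/(sup g − inf g). -/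
open MeasureTheory Set

theorem fayad_helper_incr (g g' g'' : ℝ → ℝ) (a b ε : ℝ)
    (hab : a < b) (hε0 : 0 < ε) (hε1 : ε < 1)
    (hd1 : ∀ x ∈ Set.Icc a b, HasDerivAt g (g' x) x)
    (hd2 : ∀ x ∈ Set.Icc a b, HasDerivAt g' (g'' x) x)
    (hc : ContinuousOn g'' (Set.Icc a b))
    (hpos : ∀ x ∈ Set.Icc a b, 0 < g' x)
    (hinf : 0 < sInf ((fun x => |g' x|) '' Set.Icc a b))
    (hcrit : sSup ((fun x => |g'' x|) '' Set.Icc a b) * (b - a)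
        ≤ ε * sInf ((fun x => |g' x|) '' Set.Icc a b)) :
    ∀ c d : ℝ, sInf (g '' Set.Icc a b) ≤ c → c ≤ d → d ≤ sSup (g '' Set.Icc a b) →
      (1 - ε) * ((d - c) / (sSup (g '' Set.Icc a b) - sInf (g '' Set.Icc a b)))
          ≤ (volume {x ∈ Set.Icc a b | c ≤ g x ∧ g x ≤ d}).toReal / (b - a) ∧
      (volume {x ∈ Set.Icc a b | c ≤ g x ∧ g x ≤ d}).toReal / (b - a)
          ≤ (1 + ε) * ((d - c) / (sSup (g '' Set.Icc a b) - sInf (g '' Set.Icc a b))) := by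
  intro c d hcI hcd hdS
  have hB : (0:ℝ) < b - a := sub_pos.2 hab
  have hgc : ContinuousOn g (Icc a b) := fun x hx => (hd1 x hx).continuousAt.continuousWithinAt
  have hg'c : ContinuousOn g' (Icc a b) := fun x hx => (hd2 x hx).continuousAt.continuousWithinAt
  set m := sInf ((fun x => |g' x|) '' Icc a b) with hm
  set M := sSup ((fun x => |g'' x|) '' Icc a b) with hM
  have haIcc : a ∈ Icc a b := left_mem_Icc.2 hab.le
  have hbIcc : b ∈ Icc a b := right_mem_Icc.2 hab.le
  have hmle : ∀ x ∈ Icc a b, m ≤ |g' x| := fun x hx =>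
    csInf_le ((isCompact_Icc.image_of_continuousOn hg'c.abs).bddBelow) (mem_image_of_mem _ hx)
  have hMge : ∀ x ∈ Icc a b, |g'' x| ≤ M := fun x hx =>
    le_csSup ((isCompact_Icc.image_of_continuousOn hc.abs).bddAbove) (mem_image_of_mem _ hx)
  have hM0 : 0 ≤ M := le_trans (abs_nonneg _) (hMge a haIcc)
  have hsm : StrictMonoOn g (Icc a b) := by
    apply strictMonoOn_of_deriv_pos (convex_Icc a b) hgc
    intro x hx
    rw [interior_Icc] at hx
    rw [(hd1 x (Ioo_subset_Icc_self hx)).deriv]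
    exact hpos x (Ioo_subset_Icc_self hx)
  have hS : sSup (g '' Icc a b) = g b := by
    apply IsGreatest.csSup_eq
    refine ⟨mem_image_of_mem g hbIcc, ?_⟩
    rintro y ⟨x, hx, rfl⟩
    exact hsm.monotoneOn hx hbIcc hx.2
  have hI : sInf (g '' Icc a b) = g a := by
    apply IsLeast.csInf_eq
    refine ⟨mem_image_of_mem g haIcc, ?_⟩
    rintro y ⟨x, hx, rfl⟩
    exact hsm.monotoneOn haIcc hx hx.1
  rw [hS] at hdS ⊢
  rw [hI] at hcI ⊢
  obtain ⟨u, hu, hgu⟩ : c ∈ g '' Icc a b :=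
    intermediate_value_Icc hab.le hgc ⟨hcI, le_trans hcd hdS⟩
  obtain ⟨v, hv, hgv⟩ : d ∈ g '' Icc a b :=
    intermediate_value_Icc hab.le hgc ⟨le_trans hcI hcd, hdS⟩
  have huv : u ≤ v := by
    by_contra h
    push_neg at h
    have := hsm hv hu h
    rw [hgu, hgv] at this; linarith
  have hset : {x ∈ Icc a b | c ≤ g x ∧ g x ≤ d} = Icc u v := by
    ext x
    simp only [mem_setOf_eq, mem_Icc]
    constructor
    · rintro ⟨hx, h1, h2⟩
      rw [← hgu] at h1
      rw [← hgv] at h2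
      exact ⟨(hsm.le_iff_le hu hx).1 h1, (hsm.le_iff_le hx hv).1 h2⟩
    · rintro ⟨h1, h2⟩
      have hx : x ∈ Icc a b := ⟨le_trans hu.1 h1, le_trans h2 hv.2⟩
      refine ⟨hx, ?_, ?_⟩
      · rw [← hgu]; exact hsm.monotoneOn hu hx h1
      · rw [← hgv]; exact hsm.monotoneOn hx hv h2
  rw [hset, Real.volume_Icc, ENNReal.toReal_ofReal (by linarith)]
  obtain ⟨η, hη, hηeq⟩ := exists_hasDerivAt_eq_slope g g' hab hgc
      (fun x hx => hd1 x (Ioo_subset_Icc_self hx))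
  have hηI : η ∈ Icc a b := Ioo_subset_Icc_self hη
  have hηpos := hpos η hηI
  have hηm : g b - g a = g' η * (b - a) := by
    rw [hηeq]; field_simp
  rcases eq_or_lt_of_le huv with heq | hlt
  · subst heq
    have hdc : d = c := by rw [← hgv, ← hgu]
    subst hdc
    norm_num
  · obtain ⟨ξ, hξ, hξeq⟩ := exists_hasDerivAt_eq_slope g g' hlt
      (hgc.mono (Icc_subset_Icc hu.1 hv.2))
      (fun x hx => hd1 x (Icc_subset_Icc hu.1 hv.2 (Ioo_subset_Icc_self hx)))
    have hξI : ξ ∈ Icc a b := Icc_subset_Icc hu.1 hv.2 (Ioo_subset_Icc_self hξ)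
    have hξpos := hpos ξ hξI
    have hL : (0:ℝ) < v - u := sub_pos.2 hlt
    have hdc : d - c = g' ξ * (v - u) := by
      rw [hξeq, ← hgu, ← hgv]; field_simp
    have hlip : |g' η - g' ξ| ≤ M * (b - a) := by
      have h1 : ‖g' η - g' ξ‖ ≤ M * ‖η - ξ‖ :=
        (convex_Icc a b).norm_image_sub_le_of_norm_hasDerivWithin_le
          (fun x hx => (hd2 x hx).hasDerivWithinAt)
          (fun x hx => by rw [Real.norm_eq_abs]; exact hMge x hx)
          hξI hηI
      rw [Real.norm_eq_abs, Real.norm_eq_abs] at h1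
      have h2 : |η - ξ| ≤ b - a := by
        rw [abs_sub_le_iff]
        constructor <;> [linarith [hηI.1, hηI.2, hξI.1, hξI.2];
          linarith [hηI.1, hηI.2, hξI.1, hξI.2]]
      nlinarith
    have hmξ : m ≤ g' ξ := (hmle ξ hξI).trans_eq (abs_of_pos hξpos)
    have hεm : ε * m ≤ ε * g' ξ := mul_le_mul_of_nonneg_left hmξ hε0.le
    obtain ⟨hlip1, hlip2⟩ := abs_le.1 hlip
    have key1 : g' ξ - ε * g' ξ ≤ g' η := by linarith
    have key2 : g' η ≤ g' ξ + ε * g' ξ := by linarith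
    rw [hdc, hηm]
    constructor
    · rw [mul_div_assoc' (1 - ε), div_le_div_iff₀ (mul_pos hηpos hB) hB]
      nlinarith [mul_le_mul_of_nonneg_right key1 (le_of_lt (mul_pos hL hB))]
    · rw [mul_div_assoc' (1 + ε), div_le_div_iff₀ hB (mul_pos hηpos hB)]
      nlinarith [mul_le_mul_of_nonneg_right key2 (le_of_lt (mul_pos hL hB))]

theorem fayad_uniform_distribution_criterion (g g' g'' : ℝ → ℝ) (a b ε : ℝ)
    (hab : a < b) (hε0 : 0 < ε) (hε1 : ε < 1)
    (hd1 : ∀ x ∈ Set.Icc a b, HasDerivAt g (g' x) x)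
    (hd2 : ∀ x ∈ Set.Icc a b, HasDerivAt g' (g'' x) x)
    (hc : ContinuousOn g'' (Set.Icc a b))
    (hmono : StrictMonoOn g (Set.Icc a b) ∨ StrictAntiOn g (Set.Icc a b))
    (hinf : 0 < sInf ((fun x => |g' x|) '' Set.Icc a b))
    (hcrit : sSup ((fun x => |g'' x|) '' Set.Icc a b) * (b - a)
        ≤ ε * sInf ((fun x => |g' x|) '' Set.Icc a b)) :
    ∀ c d : ℝ, sInf (g '' Set.Icc a b) ≤ c → c ≤ d → d ≤ sSup (g '' Set.Icc a b) →
      (1 - ε) * ((d - c) / (sSup (g '' Set.Icc a b) - sInf (g '' Set.Icc a b)))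
          ≤ (volume {x ∈ Set.Icc a b | c ≤ g x ∧ g x ≤ d}).toReal / (b - a) ∧
      (volume {x ∈ Set.Icc a b | c ≤ g x ∧ g x ≤ d}).toReal / (b - a)
          ≤ (1 + ε) * ((d - c) / (sSup (g '' Set.Icc a b) - sInf (g '' Set.Icc a b))) := by
  intro c d hcI hcd hdS
  have hg'c : ContinuousOn g' (Icc a b) := fun x hx => (hd2 x hx).continuousAt.continuousWithinAt
  have haIcc : a ∈ Icc a b := left_mem_Icc.2 hab.le
  have hmle : ∀ x ∈ Icc a b, sInf ((fun x => |g' x|) '' Icc a b) ≤ |g' x| := fun x hx =>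
    csInf_le ((isCompact_Icc.image_of_continuousOn hg'c.abs).bddBelow) (mem_image_of_mem _ hx)
  have hne : ∀ x ∈ Icc a b, g' x ≠ 0 := by
    intro x hx h
    have := hmle x hx
    rw [h, abs_zero] at this
    linarith
  -- derivative has constant sign
  have hsign : (∀ x ∈ Icc a b, 0 < g' x) ∨ (∀ x ∈ Icc a b, g' x < 0) := by
    rcases (hne a haIcc).lt_or_gt with h0 | h0
    · right
      intro x hx
      by_contra h
      push_neg at h
      have hx0 : 0 < g' x := lt_of_le_of_ne h (Ne.symm (hne x hx))
      have hsub : uIcc a x ⊆ Icc a b := by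
        rw [uIcc_of_le hx.1]
        exact Icc_subset_Icc le_rfl hx.2
      have : (0:ℝ) ∈ uIcc (g' a) (g' x) := by
        rw [Set.mem_uIcc]; left; exact ⟨h0.le, hx0.le⟩
      obtain ⟨y, hy, hy0⟩ := intermediate_value_uIcc (hg'c.mono hsub) this
      exact hne y (hsub hy) hy0
    · left
      intro x hx
      by_contra h
      push_neg at h
      have hx0 : g' x < 0 := lt_of_le_of_ne h (hne x hx)
      have hsub : uIcc a x ⊆ Icc a b := by
        rw [uIcc_of_le hx.1]
        exact Icc_subset_Icc le_rfl hx.2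
      have : (0:ℝ) ∈ uIcc (g' a) (g' x) := by
        rw [Set.mem_uIcc]; right; exact ⟨hx0.le, h0.le⟩
      obtain ⟨y, hy, hy0⟩ := intermediate_value_uIcc (hg'c.mono hsub) this
      exact hne y (hsub hy) hy0
  rcases hsign with hpos | hneg
  · exact fayad_helper_incr g g' g'' a b ε hab hε0 hε1 hd1 hd2 hc hpos hinf hcrit c d hcI hcd hdS
  · -- apply to -g
    have himg : (fun x => -g x) '' Icc a b = -(g '' Icc a b) := by
      ext y
      simp only [Set.mem_image, Set.mem_neg]
      constructor
      · rintro ⟨x, hx, rfl⟩; exact ⟨x, hx, by ring⟩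
      · rintro ⟨x, hx, hxy⟩; exact ⟨x, hx, by linarith⟩
    have hSneg : sSup ((fun x => -g x) '' Icc a b) = -sInf (g '' Icc a b) := by
      rw [himg]
      linarith [Real.sInf_def (g '' Icc a b)]
    have hIneg : sInf ((fun x => -g x) '' Icc a b) = -sSup (g '' Icc a b) := by
      rw [himg, Real.sInf_def, neg_neg]
    have e1 : (fun x => |(-(g' x))|) = fun x => |g' x| := funext fun x => abs_neg _
    have e2 : (fun x => |(-(g'' x))|) = fun x => |g'' x| := funext fun x => abs_neg _
    have h := fayad_helper_incr (fun x => -g x) (fun x => -g' x) (fun x => -g'' x) a b ε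
      hab hε0 hε1
      (fun x hx => (hd1 x hx).neg) (fun x hx => (hd2 x hx).neg) hc.neg
      (fun x hx => by simpa using (hneg x hx))
      (by simpa only [e1] using hinf)
      (by simpa only [e1, e2] using hcrit)
      (-d) (-c) (by rw [hIneg]; linarith) (by linarith) (by rw [hSneg]; linarith)
    rw [hSneg, hIneg] at h
    have hsets : {x ∈ Icc a b | -d ≤ -g x ∧ -g x ≤ -c} = {x ∈ Icc a b | c ≤ g x ∧ g x ≤ d} := by
      ext x
      simp only [mem_setOf_eq]
      constructor
      · rintro ⟨h1, h2, h3⟩; exact ⟨h1, by linarith, by linarith⟩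
      · rintro ⟨h1, h2, h3⟩; exact ⟨h1, by linarith, by linarith⟩
    rw [hsets] at h
    have harith : -c - -d = d - c := by ring
    have harith2 : -sInf (g '' Icc a b) - -sSup (g '' Icc a b)
        = sSup (g '' Icc a b) - sInf (g '' Icc a b) := by ring
    rw [harith, harith2] at h
    exact h
end

section
/- Kochergin's pull-back lemma: let T: I → I preserve Lebesgue measure, f ≥ m_f > 0 with f ∈ L¹(I), and define R_t(x) = T^{r(x,t)}x where r(x,t) = max{r : S_r f(x) ≤ t}. Then for any measurable set S ⊆ I, Leb(R_t^{-1}(S)) ≤ ∫_S (f(x)/m_f + 1) dx. -/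
/-!
A point `x` with `R_t x ∈ S` lies in `A_r = T^{-r} S ∩ {r(·, t) = r}` for `r = r(x, t) ≤ K := ⌊t / m⌋`.
Pulling `A_r` back by `T^{K-r}` keeps its measure, and every `x` lies in at most `f(T^K x) / m + 1`
of the pulled-back sets, all of which force `T^K x ∈ S`: the sums `S_r f (T^{K-r} x)` grow by at least
`m` per step in `r`, and membership confines them to the window `(t - f(T^K x), t]`. Integrating this
count against the invariant measure, with `T^K` absorbed by invariance, gives `∫_S (f / m + 1)`.
-/

open MeasureTheory

/-- The `r`-th Birkhoff sum of `f` along the orbit of `x` under `T`. -/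
noncomputable def birkSum (T f : ℝ → ℝ) (r : ℕ) (x : ℝ) : ℝ :=
  ∑ i ∈ Finset.range r, f (T^[i] x)

/-- `hitCount T f x t = max {r : S_r f(x) ≤ t}`. -/
noncomputable def hitCount (T f : ℝ → ℝ) (x t : ℝ) : ℕ :=
  sSup {r : ℕ | birkSum T f r x ≤ t}

open Finset ENNReal

theorem card_filter_mem_Ioc_le {Φ : ℕ → ℝ} {m a b : ℝ} (hm : 0 < m) (hab : a ≤ b)
    (hΦ : ∀ r, Φ r + m ≤ Φ (r + 1)) (s : Finset ℕ) :
    (#{r ∈ s | Φ r ∈ Set.Ioc a b} : ℝ) ≤ (b - a) / m + 1 := by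
  set M := {r ∈ s | Φ r ∈ Set.Ioc a b}
  rcases M.eq_empty_or_nonempty with hM | hM
  · rw [hM, card_empty, Nat.cast_zero]
    positivity
  have hmono : Monotone fun r : ℕ => Φ r - r * m :=
    monotone_nat_of_le_succ fun r => by push_cast; linarith [hΦ r]
  have hmin := (mem_filter.1 (M.min'_mem hM)).2
  have hmax := (mem_filter.1 (M.max'_mem hM)).2
  have hle : M.min' hM ≤ M.max' hM := M.min'_le _ (M.max'_mem hM)
  have hgap : ((M.max' hM : ℝ) - M.min' hM) * m < b - a := by
    linarith [hmono hle, hmin.1, hmax.2]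
  have hcard : #M ≤ M.max' hM + 1 - M.min' hM := by
    simpa using card_le_card fun r hr => mem_Icc.2 ⟨M.min'_le r hr, M.le_max' r hr⟩
  rw [← Nat.cast_le (α := ℝ), Nat.cast_sub (by omega)] at hcard
  push_cast at hcard
  linarith [(lt_div_iff₀ hm).2 hgap]

theorem AEMeasurable.exists_measurable_forall_ge_ae_eq {α : Type*} [MeasurableSpace α]
    {μ : Measure α} {f : α → ℝ} {m : ℝ} (hf : AEMeasurable f μ) (hfm : ∀ᵐ x ∂μ, m ≤ f x) :
    ∃ g : α → ℝ, Measurable g ∧ (∀ x, m ≤ g x) ∧ f =ᵐ[μ] g := by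
  refine ⟨fun x => hf.mk f x ⊔ m, hf.measurable_mk.sup_const m, fun x => le_sup_right, ?_⟩
  filter_upwards [hf.ae_eq_mk, hfm] with x hx hxm
  rw [← hx, sup_eq_left.2 hxm]

theorem Function.iterate_iterate_sub {α : Type*} (T : α → α) {K r : ℕ} (h : r ≤ K) (x : α) :
    T^[r] (T^[K - r] x) = T^[K] x := by
  rw [← Function.iterate_add_apply, Nat.add_sub_cancel' h]

section BirkhoffSum

variable {T f g : ℝ → ℝ} {m t : ℝ}

theorem birkSum_zero (T g : ℝ → ℝ) (x : ℝ) : birkSum T g 0 x = 0 := by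
  simp [birkSum]

theorem birkSum_succ (T g : ℝ → ℝ) (r : ℕ) (x : ℝ) :
    birkSum T g (r + 1) x = birkSum T g r x + g (T^[r] x) :=
  sum_range_succ _ _

theorem birkSum_succ' (T g : ℝ → ℝ) (r : ℕ) (x : ℝ) :
    birkSum T g (r + 1) x = g x + birkSum T g r (T x) := by
  simp only [birkSum, sum_range_succ', Function.iterate_succ_apply, Function.iterate_zero_apply,
    add_comm]

theorem natCast_mul_le_birkSum (hg : ∀ x, m ≤ g x) (r : ℕ) (x : ℝ) :
    r * m ≤ birkSum T g r x := by
  simpa [birkSum, mul_comm] using card_nsmul_le_sum (range r) (fun i => g (T^[i] x)) m fun i _ => hg _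

theorem hitCount_congr {x : ℝ} (h : ∀ i, f (T^[i] x) = g (T^[i] x)) (t : ℝ) :
    hitCount T f x t = hitCount T g x t := by
  have hsum : ∀ r, birkSum T f r x = birkSum T g r x := fun r => sum_congr rfl fun i _ => h i
  simp only [hitCount, hsum]

theorem le_floor_of_birkSum_le (hm : 0 < m) (hg : ∀ x, m ≤ g x) {r : ℕ} {x : ℝ}
    (h : birkSum T g r x ≤ t) : r ≤ ⌊t / m⌋₊ :=
  Nat.le_floor <| (le_div_iff₀ hm).2 <| (natCast_mul_le_birkSum hg r x).trans h

theorem hitCount_le_floor (hm : 0 < m) (hg : ∀ x, m ≤ g x) (x t : ℝ) :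
    hitCount T g x t ≤ ⌊t / m⌋₊ :=
  csSup_le' fun _ hr => le_floor_of_birkSum_le hm hg hr

theorem hitCount_of_neg (hm : 0 ≤ m) (hg : ∀ x, m ≤ g x) (x : ℝ) (ht : t < 0) :
    hitCount T g x t = 0 := by
  have hempty : {r : ℕ | birkSum T g r x ≤ t} = ∅ :=
    Set.eq_empty_of_forall_notMem fun r hr =>
      (ht.trans_le (by positivity)).not_ge ((natCast_mul_le_birkSum hg r x).trans hr)
  rw [hitCount, hempty]
  exact csSup_empty

/-- The level set `{x | r(x, t) = r}` of the hitting count, for `t ≥ 0`. -/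
def hitCountLevel (T g : ℝ → ℝ) (t : ℝ) (r : ℕ) : Set ℝ :=
  {x | birkSum T g r x ≤ t ∧ t < birkSum T g (r + 1) x}

theorem mem_hitCountLevel_hitCount (hm : 0 < m) (hg : ∀ x, m ≤ g x) (x : ℝ) (ht : 0 ≤ t) :
    x ∈ hitCountLevel T g t (hitCount T g x t) := by
  have hbdd : BddAbove {r : ℕ | birkSum T g r x ≤ t} :=
    ⟨⌊t / m⌋₊, fun _ hr => le_floor_of_birkSum_le hm hg hr⟩
  have hne : {r : ℕ | birkSum T g r x ≤ t}.Nonempty := ⟨0, by simpa [birkSum_zero] using ht⟩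
  refine ⟨Nat.sSup_mem hne hbdd, lt_of_not_ge fun hle => ?_⟩
  exact (le_csSup hbdd hle).not_gt (Nat.lt_succ_self _)

theorem measurableSet_hitCountLevel (hT : Measurable T) (hg : Measurable g) (t : ℝ) (r : ℕ) :
    MeasurableSet (hitCountLevel T g t r) := by
  have hsum : ∀ r, Measurable (birkSum T g r) := fun r =>
    Finset.measurable_sum _ fun i _ => hg.comp (hT.iterate i)
  exact (measurableSet_le (hsum r) measurable_const).inter
    (measurableSet_lt measurable_const (hsum (r + 1)))

theorem birkSum_iterate_sub_add_le (hg : ∀ x, m ≤ g x) (K : ℕ) (x : ℝ) (r : ℕ) :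
    birkSum T g r (T^[K - r] x) + m ≤ birkSum T g (r + 1) (T^[K - (r + 1)] x) := by
  rcases lt_or_ge r K with h | h
  · have hK : K - r = K - (r + 1) + 1 := by omega
    rw [birkSum_succ', ← Function.iterate_succ_apply' T, Nat.succ_eq_add_one, ← hK]
    linarith [hg (T^[K - (r + 1)] x)]
  · rw [Nat.sub_eq_zero_of_le h, Nat.sub_eq_zero_of_le (by omega), birkSum_succ,
      Function.iterate_zero_apply]
    linarith [hg (T^[r] x)]

theorem sum_indicator_preimage_hitCountLevel_le (hm : 0 < m) (hg : ∀ x, m ≤ g x) (S : Set ℝ)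
    (t : ℝ) (K : ℕ) (x : ℝ) :
    ∑ r ∈ range (K + 1), (T^[K - r] ⁻¹' (T^[r] ⁻¹' S ∩ hitCountLevel T g t r)).indicator 1 x
      ≤ S.indicator (fun y => ENNReal.ofReal (g y / m + 1)) (T^[K] x) := by
  have hmem : ∀ r ∈ range (K + 1), x ∈ T^[K - r] ⁻¹' (T^[r] ⁻¹' S ∩ hitCountLevel T g t r) ↔
      T^[K] x ∈ S ∧ birkSum T g r (T^[K - r] x) ∈ Set.Ioc (t - g (T^[K] x)) t := by
    intro r hr
    have hiter := Function.iterate_iterate_sub T (mem_range_succ_iff.1 hr) x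
    simp only [Set.mem_preimage, Set.mem_inter_iff, hitCountLevel, Set.mem_ofPred_eq,
      birkSum_succ, hiter, Set.mem_Ioc, sub_lt_iff_lt_add]
    tauto
  by_cases hS : T^[K] x ∈ S
  · rw [S.indicator_of_mem hS]
    have hgap : t - g (T^[K] x) ≤ t := by linarith [hm.trans_le (hg (T^[K] x))]
    calc ∑ r ∈ range (K + 1),
          (T^[K - r] ⁻¹' (T^[r] ⁻¹' S ∩ hitCountLevel T g t r)).indicator 1 x
        = ((#{r ∈ range (K + 1) |
            birkSum T g r (T^[K - r] x) ∈ Set.Ioc (t - g (T^[K] x)) t} : ℕ) : ℝ≥0∞) := by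
          rw [natCast_card_filter]
          refine sum_congr rfl fun r hr => ?_
          simp only [Set.indicator, hmem r hr, hS, true_and, Pi.one_apply]
      _ ≤ ENNReal.ofReal (g (T^[K] x) / m + 1) := by
          rw [← ofReal_natCast]
          refine ofReal_le_ofReal ?_
          simpa using card_filter_mem_Ioc_le hm hgap (birkSum_iterate_sub_add_le hg K x) _
  · rw [S.indicator_of_notMem hS]
    refine (sum_eq_zero fun r hr => ?_).le
    exact Set.indicator_of_notMem (fun h => hS ((hmem r hr).1 h).1) _

end BirkhoffSum

section Pullback

variable {T f g : ℝ → ℝ} {m t : ℝ} {μ : Measure ℝ} {S : Set ℝ}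

theorem iterate_hitCount_ae_eq
    (hT : Measure.QuasiMeasurePreserving T μ μ) (hfg : f =ᵐ[μ] g) (t : ℝ) :
    (fun x => T^[hitCount T f x t] x) =ᵐ[μ] fun x => T^[hitCount T g x t] x := by
  have horbit : ∀ᵐ x ∂μ, ∀ i, f (T^[i] x) = g (T^[i] x) :=
    ae_all_iff.2 fun i => (hT.iterate i).ae_eq hfg
  filter_upwards [horbit] with x hx
  rw [hitCount_congr hx]

theorem measure_preimage_iterate_hitCount_le_of_nonneg (hm : 0 < m)
    (hT : MeasurePreserving T μ μ) (hg : Measurable g) (hgm : ∀ x, m ≤ g x) (ht : 0 ≤ t)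
    (hS : MeasurableSet S) :
    μ ((fun x => T^[hitCount T g x t] x) ⁻¹' S) ≤ ∫⁻ x in S, ENNReal.ofReal (g x / m + 1) ∂μ := by
  set K := ⌊t / m⌋₊
  set A : ℕ → Set ℝ := fun r => T^[r] ⁻¹' S ∩ hitCountLevel T g t r
  have hA : ∀ r, MeasurableSet (A r) := fun r =>
    (hT.measurable.iterate r hS).inter (measurableSet_hitCountLevel hT.measurable hg t r)
  have hcover : (fun x => T^[hitCount T g x t] x) ⁻¹' S ⊆ ⋃ r ∈ range (K + 1), A r := fun x hx =>
    Set.mem_biUnion (mem_range_succ_iff.2 (hitCount_le_floor hm hgm x t))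
      ⟨hx, mem_hitCountLevel_hitCount hm hgm x ht⟩
  calc μ ((fun x => T^[hitCount T g x t] x) ⁻¹' S)
      ≤ ∑ r ∈ range (K + 1), μ (A r) := (measure_mono hcover).trans (measure_biUnion_finset_le _ _)
    _ = ∑ r ∈ range (K + 1), μ (T^[K - r] ⁻¹' A r) := sum_congr rfl fun r _ =>
        ((hT.iterate (K - r)).measure_preimage (hA r).nullMeasurableSet).symm
    _ = ∫⁻ x, ∑ r ∈ range (K + 1), (T^[K - r] ⁻¹' A r).indicator 1 x ∂μ := by
        rw [lintegral_finsetSum _ fun r _ =>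
          measurable_one.indicator (hT.measurable.iterate (K - r) (hA r))]
        exact sum_congr rfl fun r _ =>
          (lintegral_indicator_one (hT.measurable.iterate (K - r) (hA r))).symm
    _ ≤ ∫⁻ x, S.indicator (fun y => ENNReal.ofReal (g y / m + 1)) (T^[K] x) ∂μ :=
        lintegral_mono fun x => sum_indicator_preimage_hitCountLevel_le hm hgm S t K x
    _ = ∫⁻ x in S, ENNReal.ofReal (g x / m + 1) ∂μ := by
        rw [(hT.iterate K).lintegral_comp
          (((hg.div_const m).add_const 1).ennreal_ofReal.indicator hS), lintegral_indicator hS]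

theorem measure_preimage_iterate_hitCount_le (hm : 0 < m)
    (hT : MeasurePreserving T μ μ) (hg : Measurable g) (hgm : ∀ x, m ≤ g x) (t : ℝ)
    (hS : MeasurableSet S) :
    μ ((fun x => T^[hitCount T g x t] x) ⁻¹' S) ≤ ∫⁻ x in S, ENNReal.ofReal (g x / m + 1) ∂μ := by
  rcases lt_or_ge t 0 with ht | ht
  · have hpre : (fun x => T^[hitCount T g x t] x) ⁻¹' S = S := by
      ext x
      simp [hitCount_of_neg hm.le hgm x ht]
    rw [hpre, ← setLIntegral_one]
    refine lintegral_mono fun x => ENNReal.one_le_ofReal.2 ?_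
    linarith [div_nonneg (hm.le.trans (hgm x)) hm.le]
  · exact measure_preimage_iterate_hitCount_le_of_nonneg hm hT hg hgm ht hS

end Pullback

theorem kochergin_pullback_lemma_general (T f : ℝ → ℝ) (m : ℝ) (hm : 0 < m)
    (hf : ∀ x ∈ Set.Ico (0:ℝ) 1, m ≤ f x)
    (hT : MeasurePreserving T (volume.restrict (Set.Ico (0:ℝ) 1))
      (volume.restrict (Set.Ico (0:ℝ) 1)))
    (hfint : IntegrableOn f (Set.Ico (0:ℝ) 1))
    (t : ℝ) (S : Set ℝ) (hS : MeasurableSet S) (hSsub : S ⊆ Set.Ico (0:ℝ) 1) :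
    (volume.restrict (Set.Ico (0:ℝ) 1)) ((fun x => T^[hitCount T f x t] x) ⁻¹' S)
      ≤ ENNReal.ofReal (∫ x in S, (f x / m + 1)) := by
  set μ := volume.restrict (Set.Ico (0:ℝ) 1)
  obtain ⟨g, hg, hgm, hfg⟩ := hfint.aemeasurable.exists_measurable_forall_ge_ae_eq
    (ae_restrict_of_forall_mem measurableSet_Ico hf)
  have hSμ : μ.restrict S = volume.restrict S := by
    rw [Measure.restrict_restrict hS, Set.inter_eq_left.2 hSsub]
  have hint : IntegrableOn (fun x => f x / m + 1) S :=
    ((hfint.mono_set hSsub).div_const m).add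
      (integrableOn_const ((measure_mono hSsub).trans_lt measure_Ico_lt_top).ne)
  have hnonneg : ∀ᵐ x ∂volume.restrict S, 0 ≤ f x / m + 1 :=
    ae_restrict_of_forall_mem hS fun x hx => by
      linarith [div_nonneg (hm.le.trans (hf x (hSsub hx))) hm.le]
  calc μ ((fun x => T^[hitCount T f x t] x) ⁻¹' S)
      = μ ((fun x => T^[hitCount T g x t] x) ⁻¹' S) :=
        measure_congr ((iterate_hitCount_ae_eq hT.quasiMeasurePreserving hfg t).preimage S)
    _ ≤ ∫⁻ x in S, ENNReal.ofReal (g x / m + 1) ∂μ :=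
        measure_preimage_iterate_hitCount_le hm hT hg hgm t hS
    _ = ∫⁻ x in S, ENNReal.ofReal (f x / m + 1) ∂μ :=
        lintegral_congr_ae (ae_restrict_of_ae (hfg.mono fun x hx => by simp only [hx]))
    _ = ENNReal.ofReal (∫ x in S, (f x / m + 1)) := by
        rw [hSμ, ofReal_integral_eq_lintegral_ofReal hint hnonneg]

theorem kochergin_pullback_lemma (T f : ℝ → ℝ) (m : ℝ) (hm : 0 < m)
    (hf : ∀ x ∈ Set.Ico (0:ℝ) 1, m ≤ f x)
    (hTmaps : Set.MapsTo T (Set.Ico (0:ℝ) 1) (Set.Ico (0:ℝ) 1))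
    (hT : MeasurePreserving T (volume.restrict (Set.Ico (0:ℝ) 1))
      (volume.restrict (Set.Ico (0:ℝ) 1)))
    (hfint : IntegrableOn f (Set.Ico (0:ℝ) 1))
    (t : ℝ) (S : Set ℝ) (hS : MeasurableSet S) (hSsub : S ⊆ Set.Ico (0:ℝ) 1) :
    (volume.restrict (Set.Ico (0:ℝ) 1)) ((fun x => T^[hitCount T f x t] x) ⁻¹' S)
      ≤ ENNReal.ofReal (∫ x in S, (f x / m + 1)) :=
  kochergin_pullback_lemma_general T f m hm hf hT hfint t S hS hSsub
end
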